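/- arXiv:2507.17669 — 2 statements merged into one kernel-verified Lean document; each statement's English description precedes it below -/
import Mathlib

section
/- Let X be a TVS with topological dual X' carrying the weak-* topology, C a closed convex cone with vertex 0 and v ∈ int(C). Then the set Δ := {p ∈ X' : p(c) ≤ 0 ∀ c ∈ C, p(v) = -1} is weak-* compact. -/
/-!
Since `v` is an interior point of `C`, the set `W = {u | v + u ∈ C ∧ v - u ∈ C}` is a
neighbourhood of `0`, and `p (v ± u) ≤ 0` together with `p v = -1` gives `|p u| ≤ 1` on `W`.
So `Δ` is a weak-* closed subset of the polar of `W`, which is compact by the Banach–Alaoglu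
theorem for topological vector spaces: in `E → 𝕜` the polar is the closed set of linear maps
bounded by `1` on `W` (each automatically continuous), and it lies in a product of closed
balls because `W` is absorbent, so Tychonoff applies.
-/

open Set Filter Topology

section BanachAlaoglu

variable {𝕜 E : Type*} [NontriviallyNormedField 𝕜] [AddCommGroup E] [Module 𝕜 E]
  [TopologicalSpace E]

theorem LinearMap.continuous_of_norm_le_one_on_nhds_zero [IsTopologicalAddGroup E]
    [ContinuousConstSMul 𝕜 E] (f : E →ₗ[𝕜] 𝕜) {U : Set E} (hU : U ∈ 𝓝 0)
    (hf : ∀ u ∈ U, ‖f u‖ ≤ 1) : Continuous f := by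
  have hp : Continuous ((normSeminorm 𝕜 𝕜).comp f) :=
    Seminorm.continuous' (r := 1) (mem_of_superset hU fun u hu => by simpa using hf u hu)
  refine continuous_of_continuousAt_zero f.toAddMonoidHom ?_
  rw [ContinuousAt, map_zero, tendsto_zero_iff_norm_tendsto_zero]
  exact hp.tendsto' 0 0 (map_zero _)

theorem exists_eq_smul_of_mem_nhds_zero [ContinuousSMul 𝕜 E] {U : Set E} (hU : U ∈ 𝓝 0)
    (x : E) : ∃ c : 𝕜, ∃ u ∈ U, x = c • u := by
  obtain ⟨r, -, hr⟩ := (absorbent_nhds_zero (𝕜 := 𝕜) hU).absorbs (x := x) |>.exists_pos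
  obtain ⟨c, hc⟩ := NormedField.exists_lt_norm 𝕜 r
  obtain ⟨u, hu, hxu⟩ := hr c hc.le (mem_singleton x)
  exact ⟨c, u, hu, hxu.symm⟩

theorem WeakDual.isCompact_polar_of_mem_nhds_zero [ProperSpace 𝕜] [IsTopologicalAddGroup E]
    [ContinuousSMul 𝕜 E] {U : Set E} (hU : U ∈ 𝓝 0) : IsCompact (WeakDual.polar 𝕜 U) := by
  set K : Set (E → 𝕜) := range ((↑) : (E →ₗ[𝕜] 𝕜) → E → 𝕜) ∩ {g | ∀ u ∈ U, ‖g u‖ ≤ 1}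
  have himage : ((↑) : WeakDual 𝕜 E → E → 𝕜) '' polar 𝕜 U = K := by
    ext g
    constructor
    · rintro ⟨p, hp, rfl⟩
      exact ⟨⟨(p : E →L[𝕜] 𝕜), rfl⟩, hp⟩
    · rintro ⟨⟨f, rfl⟩, hf⟩
      exact ⟨⟨f, f.continuous_of_norm_le_one_on_nhds_zero hU hf⟩, hf, rfl⟩
  choose c u hu hxu using exists_eq_smul_of_mem_nhds_zero (𝕜 := 𝕜) hU
  have hbounded : K ⊆ univ.pi fun x => Metric.closedBall 0 ‖c x‖ := by
    rintro _ ⟨⟨f, rfl⟩, hf⟩ x -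
    rw [Metric.mem_closedBall, dist_zero_right]
    calc ‖f x‖ = ‖c x‖ * ‖f (u x)‖ := by rw [← norm_smul, ← map_smul, ← hxu x]
      _ ≤ ‖c x‖ := mul_le_of_le_one_right (norm_nonneg _) (hf _ (hu x))
  have hclosed : IsClosed K := by
    refine (LinearMap.isClosed_range_coe _ _ _).inter ?_
    simp only [ofPred_forall]
    exact isClosed_biInter fun u _ => isClosed_le (continuous_apply u).norm continuous_const
  have hembed : IsEmbedding ((↑) : WeakDual 𝕜 E → E → 𝕜) :=
    DFunLike.coe_injective.isEmbedding_induced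
  rw [hembed.isCompact_iff, himage]
  exact (isCompact_univ_pi fun x => ProperSpace.isCompact_closedBall 0 _).of_isClosed_subset
    hclosed hbounded

end BanachAlaoglu

theorem setOf_add_mem_and_sub_mem_mem_nhds_zero {G : Type*} [AddCommGroup G] [TopologicalSpace G]
    [IsTopologicalAddGroup G] {s : Set G} {v : G} (hv : v ∈ interior s) :
    {u : G | v + u ∈ s ∧ v - u ∈ s} ∈ 𝓝 0 := by
  have hs : s ∈ 𝓝 v := mem_interior_iff_mem_nhds.1 hv
  have hadd : Tendsto (v + ·) (𝓝 0) (𝓝 v) := by simpa using (continuous_const_add v).tendsto 0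
  have hsub : Tendsto (v - ·) (𝓝 0) (𝓝 v) := by simpa using (continuous_sub_left v).tendsto 0
  exact inter_mem (hadd hs) (hsub hs)

theorem stmt_8_general {X : Type*} [AddCommGroup X] [Module ℝ X] [TopologicalSpace X]
    [IsTopologicalAddGroup X] [ContinuousSMul ℝ X]
    (C : Set X) (v : X) (hv : v ∈ interior C) :
    IsCompact {p : WeakDual ℝ X | (∀ c ∈ C, p c ≤ 0) ∧ p v = -1} := by
  have hclosed : IsClosed {p : WeakDual ℝ X | (∀ c ∈ C, p c ≤ 0) ∧ p v = -1} := by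
    simp only [ofPred_and, ofPred_forall]
    exact .inter
      (isClosed_biInter fun c _ => isClosed_le (WeakDual.eval_continuous c) continuous_const)
      (isClosed_eq (WeakDual.eval_continuous v) continuous_const)
  have hpolar : {p : WeakDual ℝ X | (∀ c ∈ C, p c ≤ 0) ∧ p v = -1} ⊆
      WeakDual.polar ℝ {u : X | v + u ∈ C ∧ v - u ∈ C} := by
    rintro p ⟨hpC, hpv⟩ u ⟨hadd, hsub⟩
    have hle := hpC _ hadd
    have hge := hpC _ hsub
    rw [map_add, hpv] at hle
    rw [map_sub, hpv] at hge
    show ‖p u‖ ≤ 1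
    rw [Real.norm_eq_abs, abs_le]
    constructor <;> linarith
  exact (WeakDual.isCompact_polar_of_mem_nhds_zero
    (setOf_add_mem_and_sub_mem_mem_nhds_zero hv)).of_isClosed_subset hclosed hpolar

theorem stmt_8 {X : Type*} [AddCommGroup X] [Module ℝ X] [TopologicalSpace X]
    [IsTopologicalAddGroup X] [ContinuousSMul ℝ X]
    (C : Set X) (hC : Convex ℝ C) (hCcl : IsClosed C)
    (hcone : ∀ t : ℝ, 0 ≤ t → ∀ c ∈ C, t • c ∈ C) (h0 : (0 : X) ∈ C)
    (v : X) (hv : v ∈ interior C) :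
    IsCompact {p : WeakDual ℝ X | (∀ c ∈ C, p c ≤ 0) ∧ p v = -1} :=
  stmt_8_general C v hv
end

section
/- Let Δ be a convex set and F : Δ → Set Δ be convex-valued with p ∉ F(p) for all p ∈ Δ. Then the correspondence Γ : Δ → Set Δ defined by Γ(x) := Δ \ F⁻¹(x) = {p ∈ Δ : x ∉ F(p)} is a KKM correspondence: for any finite set {x₁,...,xₙ} ⊆ Δ, conv{x₁,...,xₙ} ⊆ ⋃ᵢ Γ(xᵢ). -/
theorem stmt_12 {V : Type*} [AddCommGroup V] [Module ℝ V]
    (Δ : Set V) (hΔ : Convex ℝ Δ)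
    (F : V → Set V) (hFsub : ∀ p ∈ Δ, F p ⊆ Δ)
    (hFconv : ∀ p ∈ Δ, Convex ℝ (F p))
    (hirr : ∀ p ∈ Δ, p ∉ F p)
    (s : Finset V) (hs : (s : Set V) ⊆ Δ) :
    convexHull ℝ (s : Set V) ⊆ ⋃ x ∈ s, {p ∈ Δ | x ∉ F p} := by
  intro p hp
  have hpΔ : p ∈ Δ := convexHull_min hs hΔ hp
  by_contra h
  simp only [Set.mem_iUnion, Set.mem_setOf_eq, not_exists, not_and, not_not] at h
  have hsub : (s : Set V) ⊆ F p := fun x hx => h x hx hpΔ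
  exact hirr p hpΔ (convexHull_min hsub (hFconv p hpΔ) hp)
end
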